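/- There exists an absolute constant C > 0 such that: for every finite symmetric set A' ⊂ ℤ\{0} and every t ∈ ℤ\{0}, writing A'_t := A' ∩ (A'+t) and B'_t := A'_t \ (−A'_t), one has ‖1̂_{B'_t}‖₁ ≤ C·‖1̂_{A'}‖₁³. -/

import Mathlib

/-- `e(x) = e^{2πix}`. -/
noncomputable def eC (x : ℝ) : ℂ := Complex.exp (2 * Real.pi * Complex.I * x)

/-- `1̂_A(x) = ∑_{a ∈ A} e(ax)`. -/
noncomputable def fhat (A : Finset ℤ) (x : ℝ) : ℂ := ∑ a ∈ A, eC ((a : ℝ) * x)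

/-- The translate `A + t`. -/
def shiftS (A : Finset ℤ) (t : ℤ) : Finset ℤ := A.image (· + t)

/-- The reflection `-A`. -/
def negS (A : Finset ℤ) : Finset ℤ := A.image (fun a => -a)

/-!
Writing `1̂_{A ∩ B}(x) = ∫₀¹ 1̂_B(y) 1̂_A(x - y) dy` and integrating in `x` gives
`‖1̂_{A ∩ B}‖₁ ≤ ‖1̂_A‖₁ ‖1̂_B‖₁`, and translation does not change `‖1̂_A‖₁`.
With `S = A' ∩ (A' + t)`, symmetry of `A'` gives `-S = A' ∩ (A' - t)`, so
`‖1̂_S‖₁ ≤ L²` and `‖1̂_{S ∩ -S}‖₁ = ‖1̂_{S ∩ (A' - t)}‖₁ ≤ L³` for `L = ‖1̂_{A'}‖₁`.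
Since `1̂_{B'_t} = 1̂_S - 1̂_{S ∩ -S}` and `L` is either `0` or at least `1`, `‖1̂_{B'_t}‖₁ ≤ 2 L³`.
-/

open MeasureTheory intervalIntegral

@[fun_prop]
lemma continuous_eC : Continuous eC := by
  unfold eC; fun_prop

lemma eC_add (x y : ℝ) : eC (x + y) = eC x * eC y := by
  unfold eC; rw [← Complex.exp_add]; push_cast; ring_nf

lemma eC_intCast (n : ℤ) : eC n = 1 := by
  unfold eC
  rw [show 2 * (Real.pi : ℂ) * Complex.I * ((n : ℝ) : ℂ) = n * (2 * Real.pi * Complex.I) by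
    push_cast; ring]
  exact Complex.exp_int_mul_two_pi_mul_I n

lemma norm_eC (x : ℝ) : ‖eC x‖ = 1 := by
  unfold eC
  rw [show 2 * (Real.pi : ℂ) * Complex.I * x = ((2 * Real.pi * x : ℝ) : ℂ) * Complex.I by
    push_cast; ring]
  exact Complex.norm_exp_ofReal_mul_I _

lemma continuous_eC_intCast_mul (n : ℤ) : Continuous fun x : ℝ => eC (n * x) :=
  continuous_eC.comp (continuous_const.mul continuous_id)

lemma integral_eC_intCast_mul (n : ℤ) :
    ∫ x in (0 : ℝ)..1, eC (n * x) = if n = 0 then 1 else 0 := by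
  have hexp : ∀ x : ℝ, eC (n * x) = Complex.exp (2 * Real.pi * Complex.I * n * x) := by
    intro x; unfold eC; push_cast; ring_nf
  simp_rw [hexp]
  split_ifs with hn
  · simp [hn]
  · have hc : 2 * (Real.pi : ℂ) * Complex.I * n ≠ 0 := by
      simp [Real.pi_ne_zero, Complex.I_ne_zero, hn]
    have hperiod : Complex.exp (2 * Real.pi * Complex.I * n) = 1 := by
      rw [show 2 * (Real.pi : ℂ) * Complex.I * n = n * (2 * Real.pi * Complex.I) by ring]
      exact Complex.exp_int_mul_two_pi_mul_I n
    rw [integral_exp_mul_complex hc]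
    simp [hperiod]

@[fun_prop]
lemma continuous_fhat (A : Finset ℤ) : Continuous (fhat A) :=
  continuous_finsetSum _ fun a _ => continuous_eC_intCast_mul a

lemma fhat_periodic (A : Finset ℤ) : Function.Periodic (fhat A) 1 := by
  intro x
  refine Finset.sum_congr rfl fun a _ => ?_
  rw [mul_add, mul_one, eC_add, eC_intCast, mul_one]

lemma fhat_shiftS (A : Finset ℤ) (t : ℤ) (x : ℝ) :
    fhat (shiftS A t) x = eC (t * x) * fhat A x := by
  unfold fhat shiftS
  rw [Finset.sum_image fun a _ b _ h => by omega, Finset.mul_sum]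
  refine Finset.sum_congr rfl fun a _ => ?_
  rw [← eC_add]; push_cast; ring_nf

lemma integral_fhat_mul_eC_neg (B : Finset ℤ) (n : ℤ) :
    ∫ y in (0 : ℝ)..1, fhat B y * eC (-(n * y)) = if n ∈ B then 1 else 0 := by
  have hterm : ∀ y : ℝ, fhat B y * eC (-(n * y)) = ∑ b ∈ B, eC (((b - n : ℤ) : ℝ) * y) := by
    intro y
    rw [fhat, Finset.sum_mul]
    refine Finset.sum_congr rfl fun b _ => ?_
    rw [← eC_add]; push_cast; ring_nf
  simp_rw [hterm]
  rw [integral_finsetSum fun b _ => (continuous_eC_intCast_mul (b - n)).intervalIntegrable 0 1]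
  simp_rw [integral_eC_intCast_mul, sub_eq_zero]
  exact Finset.sum_ite_eq' B n fun _ => 1

lemma fhat_inter_eq_integral (A B : Finset ℤ) (x : ℝ) :
    fhat (A ∩ B) x = ∫ y in (0 : ℝ)..1, fhat B y * fhat A (x - y) := by
  have hterm : ∀ y : ℝ, fhat B y * fhat A (x - y)
      = ∑ a ∈ A, eC (a * x) * (fhat B y * eC (-(a * y))) := by
    intro y
    rw [show fhat A (x - y) = ∑ a ∈ A, eC (a * (x - y)) from rfl, Finset.mul_sum]
    refine Finset.sum_congr rfl fun a _ => ?_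
    rw [mul_sub, sub_eq_add_neg, eC_add]; ring
  simp_rw [hterm]
  rw [integral_finsetSum (f := fun (a : ℤ) y => eC (a * x) * (fhat B y * eC (-(a * y))))
    fun a _ => Continuous.intervalIntegrable (by fun_prop) 0 1]
  simp_rw [intervalIntegral.integral_const_mul, integral_fhat_mul_eC_neg, mul_ite, mul_one, mul_zero]
  rw [Finset.sum_ite_mem, fhat]

/-- `‖1̂_A‖₁`. -/
noncomputable def fhatL1 (A : Finset ℤ) : ℝ := ∫ x in (0 : ℝ)..1, ‖fhat A x‖

lemma fhatL1_nonneg (A : Finset ℤ) : 0 ≤ fhatL1 A :=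
  integral_nonneg zero_le_one fun _ _ => norm_nonneg _

lemma fhatL1_shiftS (A : Finset ℤ) (t : ℤ) : fhatL1 (shiftS A t) = fhatL1 A := by
  unfold fhatL1
  simp_rw [fhat_shiftS, norm_mul, norm_eC, one_mul]

lemma integral_norm_fhat_sub (A : Finset ℤ) (y : ℝ) :
    ∫ x in (0 : ℝ)..1, ‖fhat A (x - y)‖ = fhatL1 A := by
  have h := ((fhat_periodic A).comp norm).intervalIntegral_add_eq (0 - y) 0
  rw [zero_add, show (0 : ℝ) - y + 1 = 1 - y by ring] at h
  rw [integral_comp_sub_right (fun x => ‖fhat A x‖)]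
  exact h

/-- The Fourier coefficient of `1̂_A` at `a ∈ A` is `1`, and it is bounded by `‖1̂_A‖₁`. -/
lemma one_le_fhatL1 {A : Finset ℤ} (hA : A.Nonempty) : 1 ≤ fhatL1 A := by
  obtain ⟨a, ha⟩ := hA
  calc (1 : ℝ) = ‖∫ x in (0 : ℝ)..1, fhat A x * eC (-(a * x))‖ := by
        simp [integral_fhat_mul_eC_neg, ha]
    _ ≤ ∫ x in (0 : ℝ)..1, ‖fhat A x * eC (-(a * x))‖ :=
        norm_integral_le_integral_norm zero_le_one
    _ = fhatL1 A := by simp_rw [norm_mul, norm_eC, mul_one, fhatL1]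

lemma fhatL1_eq_zero_or_one_le (A : Finset ℤ) : fhatL1 A = 0 ∨ 1 ≤ fhatL1 A := by
  rcases A.eq_empty_or_nonempty with rfl | hA
  · left; simp [fhatL1, fhat]
  · exact Or.inr (one_le_fhatL1 hA)

lemma integrable_prod_restrict_Ioc {F : ℝ × ℝ → ℝ} (hF : Continuous F) (a b : ℝ) :
    Integrable F ((volume.restrict (Set.Ioc a b)).prod (volume.restrict (Set.Ioc a b))) := by
  rw [Measure.prod_restrict]
  refine IntegrableOn.mono_set ?_ (Set.prod_mono Set.Ioc_subset_Icc_self Set.Ioc_subset_Icc_self)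
  rw [← Measure.volume_eq_prod]
  exact hF.continuousOn.integrableOn_compact (isCompact_Icc.prod isCompact_Icc)

lemma fhatL1_inter_le (A B : Finset ℤ) : fhatL1 (A ∩ B) ≤ fhatL1 A * fhatL1 B := by
  set μ := volume.restrict (Set.Ioc (0 : ℝ) 1)
  have hμ : ∀ f : ℝ → ℝ, ∫ x in (0 : ℝ)..1, f x = ∫ x, f x ∂μ :=
    fun f => integral_of_le zero_le_one
  set F : ℝ × ℝ → ℝ := fun p => ‖fhat B p.2‖ * ‖fhat A (p.1 - p.2)‖
  have hF : Integrable F (μ.prod μ) := integrable_prod_restrict_Ioc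
    (((continuous_fhat B).comp continuous_snd).norm.mul
      ((continuous_fhat A).comp (continuous_fst.sub continuous_snd)).norm) 0 1
  have hpointwise : ∀ x, ‖fhat (A ∩ B) x‖ ≤ ∫ y, F (x, y) ∂μ := fun x => by
    rw [fhat_inter_eq_integral, ← hμ (fun y => F (x, y))]
    refine (intervalIntegral.norm_integral_le_integral_norm zero_le_one).trans_eq ?_
    simp only [F, norm_mul]
  have hinner : ∀ y, ∫ x, F (x, y) ∂μ = ‖fhat B y‖ * fhatL1 A := fun y => by
    rw [← hμ (fun x => F (x, y))]
    simp only [F]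
    rw [intervalIntegral.integral_const_mul, integral_norm_fhat_sub]
  calc fhatL1 (A ∩ B) = ∫ x, ‖fhat (A ∩ B) x‖ ∂μ := hμ _
    _ ≤ ∫ x, ∫ y, F (x, y) ∂μ ∂μ :=
        integral_mono (continuous_fhat _).norm.integrableOn_Ioc hF.integral_prod_left hpointwise
    _ = ∫ y, ∫ x, F (x, y) ∂μ ∂μ := integral_integral_swap hF
    _ = (∫ y, ‖fhat B y‖ ∂μ) * fhatL1 A := by
        simp_rw [hinner, MeasureTheory.integral_mul_const]
    _ = fhatL1 A * fhatL1 B := by rw [← hμ, mul_comm]; rfl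

lemma fhat_sdiff (S T : Finset ℤ) (x : ℝ) : fhat (S \ T) x = fhat S x - fhat (S ∩ T) x := by
  rw [eq_sub_iff_add_eq, fhat, fhat, fhat, ← Finset.sum_union (Finset.disjoint_sdiff_inter S T),
    Finset.sdiff_union_inter]

lemma fhatL1_sdiff_le (S T : Finset ℤ) : fhatL1 (S \ T) ≤ fhatL1 S + fhatL1 (S ∩ T) := by
  unfold fhatL1
  rw [← integral_add ((continuous_fhat _).norm.intervalIntegrable 0 1)
    ((continuous_fhat _).norm.intervalIntegrable 0 1)]
  refine integral_mono_on zero_le_one ((continuous_fhat _).norm.intervalIntegrable 0 1)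
    (((continuous_fhat _).norm.add (continuous_fhat _).norm).intervalIntegrable 0 1)
    fun x _ => ?_
  rw [fhat_sdiff]
  exact norm_sub_le _ _

lemma mem_shiftS {A : Finset ℤ} {t n : ℤ} : n ∈ shiftS A t ↔ n - t ∈ A := by
  simp [shiftS, sub_eq_add_neg]

lemma mem_negS {A : Finset ℤ} {n : ℤ} : n ∈ negS A ↔ -n ∈ A := by
  simp [negS, neg_eq_iff_eq_neg]

lemma negS_inter_shiftS {A : Finset ℤ} (hA : ∀ a, a ∈ A ↔ -a ∈ A) (t : ℤ) :
    negS (A ∩ shiftS A t) = A ∩ shiftS A (-t) := by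
  ext n
  simp only [Finset.mem_inter, mem_negS, mem_shiftS, sub_neg_eq_add, ← hA n]
  rw [show -n - t = -(n + t) by ring, ← hA]

/-- `‖1̂_{B'_t}‖₁ ≪ ‖1̂_{A'}‖₁³` where `B'_t = (A' ∩ (A'+t)) \ (-(A' ∩ (A'+t)))`. -/
theorem l1_bound_Bt :
    ∃ C : ℝ, 0 < C ∧
      ∀ A' : Finset ℤ, (0 : ℤ) ∉ A' → (∀ a : ℤ, a ∈ A' ↔ -a ∈ A') →
        ∀ t : ℤ, t ≠ 0 →
          (∫ x in (0:ℝ)..1,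
              ‖fhat ((A' ∩ shiftS A' t) \ negS (A' ∩ shiftS A' t)) x‖) ≤
            C * (∫ x in (0:ℝ)..1, ‖fhat A' x‖) ^ 3 := by
  refine ⟨2, two_pos, fun A _ hA t _ => ?_⟩
  change fhatL1 _ ≤ 2 * fhatL1 A ^ 3
  set S := A ∩ shiftS A t
  set L := fhatL1 A
  have hS : fhatL1 S ≤ L * L := (fhatL1_inter_le _ _).trans_eq (by rw [fhatL1_shiftS])
  have hSneg : fhatL1 (S ∩ negS S) ≤ L * L * L := by
    have hinter : S ∩ negS S = S ∩ shiftS A (-t) := by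
      ext n
      simp only [S, negS_inter_shiftS hA, Finset.mem_inter]
      tauto
    calc fhatL1 (S ∩ negS S) ≤ fhatL1 S * fhatL1 (shiftS A (-t)) :=
          hinter ▸ fhatL1_inter_le _ _
      _ = fhatL1 S * L := by rw [fhatL1_shiftS]
      _ ≤ L * L * L := mul_le_mul_of_nonneg_right hS (fhatL1_nonneg A)
  have hL : L * L ≤ L ^ 3 := by
    rcases fhatL1_eq_zero_or_one_le A with h | h
    · simp [L, h]
    · nlinarith
  linarith [fhatL1_sdiff_le S (negS S)]
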